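/- Suppose there exist real constants C₁, C₂ > 0, positive integers j and d, and a function m ↦ n(m) from positive integers to positive integers with n(m) → ∞ as m → ∞, such that for every positive integer m with m ≡ j (mod d) and every primitive m-th root of unity x_m, one has |χ_{n(m)}(x_m)| ≥ C₁ and max(|Q_{n(m)}(x_m)|, |Q_{n(m)-1}(x_m)|) ≤ C₂. Then there exists an uncountable set Y of points on the unit circle {z ∈ ℂ : |z| = 1} such that for every y ∈ Y there are infinitely many positive integers n with |P_n(y)Q_{n-1}(y) − P_{n-1}(y)Q_n(y)| > C₁/2 and |Q_n(y)| < 1 + C₂ and |Q_{n-1}(y)| < 1 + C₂. -/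

import Mathlib

open Filter Topology Polynomial

/-- Numerators `P_n` of the continued fraction `b₀ + K_{n=1}^∞ aₙ/bₙ` with integer
polynomial partial numerators `a n` (`n ≥ 1`; `a 0` is unused) and partial denominators
`b n`, evaluated at `q : ℂ`:  `P_{-1} = 1`, `P_0 = b₀`, `P_n = bₙ P_{n-1} + aₙ P_{n-2}`. -/
noncomputable def gP (a b : ℕ → Polynomial ℤ) (q : ℂ) : ℕ → ℂ
  | 0 => aeval q (b 0)
  | 1 => aeval q (b 1) * aeval q (b 0) + aeval q (a 1)
  | n + 2 => aeval q (b (n + 2)) * gP a b q (n + 1) + aeval q (a (n + 2)) * gP a b q n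

/-- Denominators `Q_n` of the continued fraction `b₀ + K_{n=1}^∞ aₙ/bₙ`:
`Q_{-1} = 0`, `Q_0 = 1`, `Q_n = bₙ Q_{n-1} + aₙ Q_{n-2}`. -/
noncomputable def gQ (a b : ℕ → Polynomial ℤ) (q : ℂ) : ℕ → ℂ
  | 0 => 1
  | 1 => aeval q (b 1)
  | n + 2 => aeval q (b (n + 2)) * gQ a b q (n + 1) + aeval q (a (n + 2)) * gQ a b q n

/-- `χ_n(q) = ∏_{i=1}^n a_i(q)`. -/
noncomputable def gChi (a : ℕ → Polynomial ℤ) (q : ℂ) (n : ℕ) : ℂ :=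
  ∏ i ∈ Finset.Icc 1 n, aeval q (a i)

/-! The identity `P_{n+1} Q_n - P_n Q_{n+1} = (-1)^n χ_{n+1}` turns the hypothesis into the three
required inequalities at `n = n(m)` for every primitive `m`-th root of unity with `m ≡ j (mod d)`,
and these inequalities are open conditions in `y`. Primitive roots of unity of orders
`gcd(j, d) * p`, with `p` a large prime in a suitable residue class (Dirichlet), are dense in the
circle, so for each `N` the points satisfying the inequalities for some `n ≥ N` form a dense open
subset of the circle. By Baire's theorem their intersection is a dense `G_δ` in a complete space
without isolated points, hence uncountable. -/

open Real

section ContinuedFraction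

variable (a b : ℕ → Polynomial ℤ)

theorem continuous_gP : ∀ n, Continuous fun q : ℂ => gP a b q n
  | 0 => (b 0).continuous_aeval
  | 1 => by
    simp only [gP]
    fun_prop
  | n + 2 => by
    have := continuous_gP n
    have := continuous_gP (n + 1)
    simp only [gP]
    fun_prop

theorem continuous_gQ : ∀ n, Continuous fun q : ℂ => gQ a b q n
  | 0 => continuous_const
  | 1 => (b 1).continuous_aeval
  | n + 2 => by
    have := continuous_gQ n
    have := continuous_gQ (n + 1)
    simp only [gQ]
    fun_prop

theorem gChi_succ (q : ℂ) (n : ℕ) : gChi a q (n + 1) = gChi a q n * aeval q (a (n + 1)) :=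
  Finset.prod_Icc_succ_top (Nat.le_add_left 1 n) _

theorem gP_succ_mul_gQ_sub_gP_mul_gQ_succ (q : ℂ) (n : ℕ) :
    gP a b q (n + 1) * gQ a b q n - gP a b q n * gQ a b q (n + 1) =
      (-1) ^ n * gChi a q (n + 1) := by
  induction n with
  | zero => simp [gP, gQ, gChi]; ring
  | succ n ih =>
    rw [gChi_succ, gP, gQ]
    linear_combination (-aeval q (a (n + 2))) * ih

theorem norm_gP_mul_gQ_pred_sub_eq_norm_gChi (q : ℂ) {n : ℕ} (hn : 0 < n) :
    ‖gP a b q n * gQ a b q (n - 1) - gP a b q (n - 1) * gQ a b q n‖ = ‖gChi a q n‖ := by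
  obtain ⟨n, rfl⟩ := Nat.exists_eq_add_of_lt hn
  simp [gP_succ_mul_gQ_sub_gP_mul_gQ_succ]

end ContinuedFraction

theorem Nat.exists_prime_gt_gcd_mul_modEq {d : ℕ} (hd : 0 < d) (j n : ℕ) :
    ∃ p > n, p.Prime ∧ j.gcd d * p ≡ j [MOD d] := by
  have hg : 0 < j.gcd d := Nat.gcd_pos_of_pos_right j hd
  have hv : d / j.gcd d ≠ 0 := (Nat.div_pos (Nat.gcd_le_right j hd) hg).ne'
  obtain ⟨p, hpn, hp, hpj⟩ :=
    Nat.forall_exists_prime_gt_and_modEq n hv (Nat.coprime_div_gcd_div_gcd hg)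
  refine ⟨p, hpn, hp, ?_⟩
  simpa only [Nat.mul_div_cancel' (Nat.gcd_dvd_left j d),
    Nat.mul_div_cancel' (Nat.gcd_dvd_right j d)] using hpj.mul_left' (j.gcd d)

theorem Int.exists_isCoprime_mul_prime_mem_Ioc {g p : ℕ} (hp : p.Prime) (hg : 0 < g)
    (hgp : g < p) (s : ℤ) :
    ∃ k : ℤ, IsCoprime k (g * p) ∧ k ∈ Set.Ioc (g * s) (g * s + g + 1) := by
  have hg_coprime (t : ℤ) : IsCoprime (g * t + 1) (g : ℤ) := ⟨1, -t, by ring⟩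
  have hp' : Prime (p : ℤ) := Nat.prime_iff_prime_int.mp hp
  have coprime_of_not_dvd {t : ℤ} (h : ¬ (p : ℤ) ∣ g * t + 1) : IsCoprime (g * t + 1) (g * p) :=
    (hg_coprime t).mul_right (hp'.coprime_iff_not_dvd.mpr h).symm
  -- `p > g` cannot divide both `g * s + 1` and `g * (s + 1) + 1`, which are prime to `g`.
  by_cases h : (p : ℤ) ∣ g * s + 1
  · have h' : ¬ (p : ℤ) ∣ g * (s + 1) + 1 := fun h' => by
      have hpg : (p : ℤ) ∣ g := by
        simpa [mul_add] using dvd_sub h' h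
      exact absurd (Nat.le_of_dvd hg (Int.natCast_dvd_natCast.mp hpg)) (not_le.mpr hgp)
    refine ⟨_, coprime_of_not_dvd h', ?_, ?_⟩ <;> linarith
  · refine ⟨_, coprime_of_not_dvd h, ?_, ?_⟩ <;> linarith

theorem dense_ratCast_den_modEq {d : ℕ} (hd : 0 < d) (j M : ℕ) :
    Dense (((↑) : ℚ → ℝ) '' {q | M ≤ q.den ∧ q.den ≡ j [MOD d]}) := by
  set g := j.gcd d
  have hg : 0 < g := Nat.gcd_pos_of_pos_right j hd
  rw [Metric.dense_iff]
  intro t ε hε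
  obtain ⟨p, hpgt, hp, hpj⟩ := Nat.exists_prime_gt_gcd_mul_modEq hd j (M + g + ⌈2 / ε⌉₊)
  obtain ⟨k, hk, hk_lo, hk_hi⟩ :=
    Int.exists_isCoprime_mul_prime_mem_Ioc hp hg (by omega) ⌊t * p⌋
  have hden : ((k / (g * p : ℤ) : ℚ).den : ℤ) = g * p :=
    Rat.den_div_eq_of_coprime (by have := hp.pos; positivity) (Int.isCoprime_iff_gcd_eq_one.mp hk)
  have hden' : (k / (g * p : ℤ) : ℚ).den = g * p := by exact_mod_cast hden
  refine ⟨_, ?_, k / (g * p : ℤ), ⟨by rw [hden']; nlinarith, by rwa [hden']⟩, rfl⟩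
  have hp0 : (0 : ℝ) < p := by exact_mod_cast hp.pos
  have hg1 : (1 : ℝ) ≤ g := by exact_mod_cast hg
  have hεp : 2 < ε * p := by
    have : 2 / ε < p := by
      refine (Nat.le_ceil _).trans_lt ?_
      exact_mod_cast (Nat.le_add_left _ _).trans_lt hpgt
    rwa [div_lt_iff₀ hε, mul_comm] at this
  have hs_lo : (⌊t * p⌋ : ℝ) ≤ t * p := Int.floor_le _
  have hs_hi : t * p < ⌊t * p⌋ + 1 := Int.lt_floor_add_one _
  have hk_lo' : (g : ℝ) * ⌊t * p⌋ < k := by exact_mod_cast hk_lo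
  have hk_hi' : (k : ℝ) ≤ g * ⌊t * p⌋ + g + 1 := by exact_mod_cast hk_hi
  rw [Metric.mem_ball, Real.dist_eq, abs_sub_lt_iff]
  push_cast
  rw [div_sub' (by positivity), sub_div' (by positivity), div_lt_iff₀ (by positivity),
    div_lt_iff₀ (by positivity)]
  constructor <;> nlinarith [mul_lt_mul_of_pos_left hεp (by positivity : (0 : ℝ) < g)]

theorem Circle.dense_setOf_isPrimitiveRoot_modEq {d : ℕ} (hd : 0 < d) (j M : ℕ) :
    Dense {z : Circle | ∃ m, M ≤ m ∧ 0 < m ∧ m ≡ j [MOD d] ∧ IsPrimitiveRoot (z : ℂ) m} := by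
  have hsurj : Function.Surjective fun t : ℝ => Circle.exp (2 * π * t) :=
    Circle.exp_surjective.comp (mul_left_surjective₀ two_pi_pos.ne')
  refine (hsurj.denseRange.dense_image (by fun_prop) (dense_ratCast_den_modEq hd j M)).mono ?_
  rintro _ ⟨_, ⟨q, ⟨hM, hj⟩, rfl⟩, rfl⟩
  refine ⟨q.den, hM, q.den_pos, hj, ?_⟩
  convert Complex.isPrimitiveRoot_exp_rat q using 2
  rw [Circle.coe_exp]
  push_cast
  ring_nf

instance Circle.instNontrivial : Nontrivial Circle := ⟨⟨_, _, Circle.exp_pi_ne_one⟩⟩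

theorem IsGδ.not_countable_of_dense {X : Type*} [TopologicalSpace X] [BaireSpace X] [T1Space X]
    [∀ x : X, (𝓝[≠] x).NeBot] [Nonempty X] {s : Set X} (hs : IsGδ s) (hd : Dense s) :
    ¬ s.Countable := by
  intro hc
  have hcompl : Dense sᶜ := by
    rw [← Set.biUnion_of_singleton s, Set.compl_iUnion₂]
    exact dense_biInter_of_isOpen (fun x _ => isOpen_compl_singleton) hc
      (fun x _ => dense_compl_singleton x)
  obtain ⟨x, hxs, hxc⟩ := (hd.inter_of_Gδ hs hc.isGδ_compl hcompl).nonempty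
  exact hxc hxs

theorem not_countable_setOf_frequently_mem {X : Type*} [TopologicalSpace X] [BaireSpace X]
    [T1Space X] [∀ x : X, (𝓝[≠] x).NeBot] [Nonempty X] {V : ℕ → Set X}
    (hV : ∀ n, IsOpen (V n)) (hd : ∀ N, Dense (⋃ n ≥ N, V n)) :
    ¬ {x | ∃ᶠ n in atTop, x ∈ V n}.Countable := by
  have hset : {x | ∃ᶠ n in atTop, x ∈ V n} = ⋂ N, ⋃ n ≥ N, V n := by
    ext x
    simp [frequently_atTop]
  rw [hset]
  exact IsGδ.not_countable_of_dense
    (.iInter_of_isOpen fun N => isOpen_biUnion fun n _ => hV n)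
    (dense_iInter_of_isOpen (fun N => isOpen_biUnion fun n _ => hV n) hd)

theorem stmt5_general (a b : ℕ → Polynomial ℤ) (C₁ C₂ : ℝ) (hC₁ : 0 < C₁)
    (j d : ℕ) (hd : 0 < d)
    (nf : ℕ → ℕ) (hnf : Tendsto nf atTop atTop)
    (hyp : ∀ m : ℕ, 0 < m → m ≡ j [MOD d] → ∀ x : ℂ, IsPrimitiveRoot x m →
      C₁ ≤ ‖gChi a x (nf m)‖ ∧
        max (‖gQ a b x (nf m)‖) (‖gQ a b x (nf m - 1)‖) ≤ C₂) :
    ∃ Y : Set ℂ, ¬ Y.Countable ∧ (∀ y ∈ Y, ‖y‖ = 1) ∧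
      ∀ y ∈ Y, ∀ N : ℕ, ∃ n ≥ N, 0 < n ∧
        C₁ / 2 <
          ‖gP a b y n * gQ a b y (n - 1) - gP a b y (n - 1) * gQ a b y n‖ ∧
        ‖gQ a b y n‖ < 1 + C₂ ∧ ‖gQ a b y (n - 1)‖ < 1 + C₂ := by
  set V : ℕ → Set Circle := fun n => {z | C₁ / 2 <
      ‖gP a b z n * gQ a b z (n - 1) - gP a b z (n - 1) * gQ a b z n‖ ∧
    ‖gQ a b z n‖ < 1 + C₂ ∧ ‖gQ a b z (n - 1)‖ < 1 + C₂}
  have hV_open (n : ℕ) : IsOpen (V n) := by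
    have := continuous_gP a b
    have := continuous_gQ a b
    simp only [V, Set.ofPred_and]
    refine .inter ?_ (.inter ?_ ?_) <;> exact isOpen_lt (by fun_prop) (by fun_prop)
  have hV_dense (N : ℕ) : Dense (⋃ n ≥ N, V n) := by
    obtain ⟨M, hM⟩ := eventually_atTop.mp (hnf.eventually_gt_atTop N)
    refine (Circle.dense_setOf_isPrimitiveRoot_modEq hd j M).mono ?_
    rintro z ⟨m, hmM, hm, hmj, hz⟩
    obtain ⟨hχ, hQ⟩ := hyp m hm hmj z hz
    have hn := hM m hmM
    refine Set.mem_biUnion hn.le ⟨?_, ?_, ?_⟩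
    · rw [norm_gP_mul_gQ_pred_sub_eq_norm_gChi a b _ (by omega)]
      linarith
    · linarith [le_max_left ‖gQ a b z (nf m)‖ ‖gQ a b z (nf m - 1)‖]
    · linarith [le_max_right ‖gQ a b z (nf m)‖ ‖gQ a b z (nf m - 1)‖]
  refine ⟨(↑) '' {z : Circle | ∃ᶠ n in atTop, z ∈ V n}, fun hc => ?_, ?_, ?_⟩
  · exact not_countable_setOf_frequently_mem hV_open hV_dense
      ((hc.preimage Subtype.val_injective).mono (Set.subset_preimage_image _ _))
  · rintro _ ⟨z, -, rfl⟩
    exact Circle.norm_coe z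
  · rintro _ ⟨z, hz, rfl⟩ N
    obtain ⟨n, hn, hzn⟩ := frequently_atTop.mp hz (N + 1)
    exact ⟨n, by omega, by omega, hzn⟩

theorem stmt5 (a b : ℕ → Polynomial ℤ) (C₁ C₂ : ℝ) (hC₁ : 0 < C₁) (hC₂ : 0 < C₂)
    (j d : ℕ) (hj : 0 < j) (hd : 0 < d)
    (nf : ℕ → ℕ) (hnfpos : ∀ m, 0 < m → 0 < nf m) (hnf : Tendsto nf atTop atTop)
    (hyp : ∀ m : ℕ, 0 < m → m ≡ j [MOD d] → ∀ x : ℂ, IsPrimitiveRoot x m →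
      C₁ ≤ ‖gChi a x (nf m)‖ ∧
        max (‖gQ a b x (nf m)‖) (‖gQ a b x (nf m - 1)‖) ≤ C₂) :
    ∃ Y : Set ℂ, ¬ Y.Countable ∧ (∀ y ∈ Y, ‖y‖ = 1) ∧
      ∀ y ∈ Y, ∀ N : ℕ, ∃ n ≥ N, 0 < n ∧
        C₁ / 2 <
          ‖gP a b y n * gQ a b y (n - 1) - gP a b y (n - 1) * gQ a b y n‖ ∧
        ‖gQ a b y n‖ < 1 + C₂ ∧ ‖gQ a b y (n - 1)‖ < 1 + C₂ :=
  stmt5_general a b C₁ C₂ hC₁ j d hd nf hnf hyp
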